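/- For every cycle-free formula φ of the counting tree logic and every finite binary tree T such that the interpretation ⟦φ⟧_∅^T is nonempty, there exists a finite unfolding φ' of the fixpoint subformulas of φ such that the interpretation of φ' with every remaining fixpoint subformula μx.ψ replaced by ¬⊤ equals the interpretation of φ, i.e. ⟦φ'{μx.ψ ↦ ¬⊤}⟧_∅^T = ⟦φ⟧_∅^T. -/

import Mathlib

set_option linter.unusedVariables false

/-! ## Modalities, trails, formulas of the counting tree logic -/

/-- The four modalities: first child, next sibling, and their converses. -/
inductive Modality : Type
  | down | right | up | left
deriving DecidableEq

/-- Converse modality. -/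
def Modality.conv : Modality → Modality
  | .down => .up
  | .up => .down
  | .right => .left
  | .left => .right

/-- Trails: regular expressions over modalities. -/
inductive Trail : Type
  | mod : Modality → Trail
  | seq : Trail → Trail → Trail
  | alt : Trail → Trail → Trail
  | star : Trail → Trail

/-- Syntactic interpretation of trails: sets of sequences of modalities. -/
def Trail.lang : Trail → Set (List Modality)
  | .mod m => {[m]}
  | .seq α β => {l | ∃ l₁ ∈ α.lang, ∃ l₂ ∈ β.lang, l = l₁ ++ l₂}
  | .alt α β => α.lang ∪ β.lang
  | .star α => {l | ∃ ls : List (List Modality), (∀ x ∈ ls, x ∈ α.lang) ∧ l = ls.flatten}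

/-- Formulas of the counting tree logic, in negation normal form, with de Bruijn
recursion variables.  Each counting formula `α⟨ψ⟩>k` / `α⟨ψ⟩≤k` is annotated by
a counting proposition `c`. -/
inductive Formula (P : Type) : Type
  | tt
  | ff
  | prop (p : P)
  | nprop (p : P)
  | var (x : ℕ)
  | or (φ₁ φ₂ : Formula P)
  | and (φ₁ φ₂ : Formula P)
  | dia (m : Modality) (φ : Formula P)
  | ndia (m : Modality)
  | gt (c : P) (α : Trail) (ψ : Formula P) (k : ℕ)
  | le (c : P) (α : Trail) (ψ : Formula P) (k : ℕ)
  | mu (ψ : Formula P)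

namespace Formula

variable {P : Type}

/-- Lift (shift) de Bruijn variables `≥ d`. -/
def lift (d : ℕ) : Formula P → Formula P
  | .tt => .tt
  | .ff => .ff
  | .prop p => .prop p
  | .nprop p => .nprop p
  | .var x => if x < d then .var x else .var (x + 1)
  | .or a b => .or (a.lift d) (b.lift d)
  | .and a b => .and (a.lift d) (b.lift d)
  | .dia m ψ => .dia m (ψ.lift d)
  | .ndia m => .ndia m
  | .gt c α ψ k => .gt c α (ψ.lift d) k
  | .le c α ψ k => .le c α (ψ.lift d) k
  | .mu ψ => .mu (ψ.lift (d + 1))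

/-- Substitution of a formula for the de Bruijn variable `d`. -/
def subst : Formula P → ℕ → Formula P → Formula P
  | .tt, _, _ => .tt
  | .ff, _, _ => .ff
  | .prop p, _, _ => .prop p
  | .nprop p, _, _ => .nprop p
  | .var x, d, σ => if x = d then σ else if d < x then .var (x - 1) else .var x
  | .or a b, d, σ => .or (a.subst d σ) (b.subst d σ)
  | .and a b, d, σ => .and (a.subst d σ) (b.subst d σ)
  | .dia m ψ, d, σ => .dia m (ψ.subst d σ)
  | .ndia m, _, _ => .ndia m
  | .gt c α ψ k, d, σ => .gt c α (ψ.subst d σ) k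
  | .le c α ψ k, d, σ => .le c α (ψ.subst d σ) k
  | .mu ψ, d, σ => .mu (ψ.subst (d + 1) (σ.lift 0))

/-- One-step unfolding of a fixpoint body: `ψ{μx.ψ / x}`. -/
def unfold (ψ : Formula P) : Formula P := ψ.subst 0 (.mu ψ)

/-- Negation normal form negation (Figure 3 of the paper). -/
def neg : Formula P → Formula P
  | .tt => .ff
  | .ff => .tt
  | .prop p => .nprop p
  | .nprop p => .prop p
  | .var x => .var x
  | .or a b => .and a.neg b.neg
  | .and a b => .or a.neg b.neg
  | .dia m ψ => .or (.ndia m) (.dia m ψ.neg)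
  | .ndia m => .dia m .tt
  | .gt c α ψ k => .le c α ψ k
  | .le c α ψ k => .gt c α ψ k
  | .mu ψ => .mu ψ.neg

/-- A formula with no counting subformula. -/
def NoCount : Formula P → Prop
  | .gt _ _ _ _ => False
  | .le _ _ _ _ => False
  | .or a b => NoCount a ∧ NoCount b
  | .and a b => NoCount a ∧ NoCount b
  | .dia _ ψ => NoCount ψ
  | .mu ψ => NoCount ψ
  | _ => True

end Formula

/-! ## Finite binary trees (Kripke-style) -/

/-- A finite binary tree: a finite set of nodes, a partial transition map on
modalities forming a tree structure, and a labeling of nodes by propositions. -/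
structure CTree (P : Type) where
  N : Type
  fin : Finite N
  R : N → Modality → Option N
  label : N → P
  conv_down : ∀ a b : N, R a .down = some b ↔ R b .up = some a
  conv_right : ∀ a b : N, R a .right = some b ↔ R b .left = some a
  one_parent : ∀ a : N, R a .up = none ∨ R a .left = none
  rooted : ∃ r : N, ∀ a : N,
    Relation.ReflTransGen (fun x y => R x .up = some y ∨ R x .left = some y) a r
  wf : WellFounded (fun a b : N => R b .down = some a ∨ R b .right = some a)

/-- Follow a sequence of modalities in a tree. -/
def CTree.follow {P : Type} (T : CTree P) : T.N → List Modality → Option T.N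
  | n, [] => some n
  | n, m :: l =>
    match T.R n m with
    | none => none
    | some n' => T.follow n' l

/-- There is a trail `α` from `a` to `b`. -/
def CTree.reach {P : Type} (T : CTree P) (α : Trail) (a b : T.N) : Prop :=
  ∃ l ∈ α.lang, T.follow a l = some b

/-! ## Semantics of formulas (Figure 4) -/

/-- Semantics of formulas: sets of nodes of a tree, under a valuation of the
recursion variables. -/
noncomputable def sem {P : Type} (T : CTree P) : Formula P → (ℕ → Set T.N) → Set T.N
  | .tt, _ => Set.univ
  | .ff, _ => ∅
  | .prop p, _ => {n | T.label n = p}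
  | .nprop p, _ => {n | T.label n ≠ p}
  | .var x, V => V x
  | .or a b, V => sem T a V ∪ sem T b V
  | .and a b, V => sem T a V ∩ sem T b V
  | .dia m ψ, V => {n | ∃ n', T.R n m = some n' ∧ n' ∈ sem T ψ V}
  | .ndia m, _ => {n | T.R n m = none}
  | .gt _ α ψ k, V => {n | k < {n' | n' ∈ sem T ψ V ∧ T.reach α n n'}.ncard}
  | .le _ α ψ k, V => {n | {n' | n' ∈ sem T ψ V ∧ T.reach α n n'}.ncard ≤ k}
  | .mu ψ, V =>
      ⋂₀ {S : Set T.N | sem T ψ (fun i => match i with | 0 => S | j + 1 => V j) ⊆ S}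

/-- The empty valuation. -/
def emptyVal {P : Type} (T : CTree P) : ℕ → Set T.N := fun _ => ∅

/-! ## Cycle-freeness and finite unfolding -/

/-- Modalities occurring in a trail. -/
def Trail.mods : Trail → Set Modality
  | .mod m => {m}
  | .seq α β => α.mods ∪ β.mods
  | .alt α β => α.mods ∪ β.mods
  | .star α => α.mods

/-- For a free de Bruijn variable `x`, the possible sets of modalities crossed
between the current point and an occurrence of `x`. -/
def Formula.occMods {P : Type} : Formula P → ℕ → Set (Set Modality)
  | .var y, x => if y = x then {∅} else ∅
  | .or a b, x => a.occMods x ∪ b.occMods x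
  | .and a b, x => a.occMods x ∪ b.occMods x
  | .dia m ψ, x => (insert m) '' ψ.occMods x
  | .gt _ α ψ _, x => (fun s => α.mods ∪ s) '' ψ.occMods x
  | .le _ α ψ _, x => (fun s => α.mods ∪ s) '' ψ.occMods x
  | .mu ψ, x => ψ.occMods (x + 1)
  | _, _ => ∅

/-- Cycle-free formulas: no fixpoint variable occurs in the scope of both a
modality and its converse, and counting formulas occur neither under fixpoints
nor under other counting formulas. -/
def Formula.CycleFree {P : Type} : Formula P → Prop
  | .mu ψ => (∀ s ∈ ψ.occMods 0, ∀ m : Modality, ¬(m ∈ s ∧ m.conv ∈ s)) ∧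
      Formula.NoCount ψ ∧ Formula.CycleFree ψ
  | .or a b => Formula.CycleFree a ∧ Formula.CycleFree b
  | .and a b => Formula.CycleFree a ∧ Formula.CycleFree b
  | .dia _ ψ => Formula.CycleFree ψ
  | .gt _ _ ψ _ => Formula.NoCount ψ ∧ Formula.CycleFree ψ
  | .le _ _ ψ _ => Formula.NoCount ψ ∧ Formula.CycleFree ψ
  | _ => True


/-- `Unfolding φ φ'` : `φ'` is a finite unfolding of the fixpoints of `φ`. -/
inductive Unfolding {P : Type} : Formula P → Formula P → Prop
  | refl (φ : Formula P) : Unfolding φ φ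
  | mu {ψ φ'} : Unfolding (Formula.subst ψ 0 (.mu ψ)) φ' → Unfolding (.mu ψ) φ'
  | or {a a' b b'} : Unfolding a a' → Unfolding b b' → Unfolding (.or a b) (.or a' b')
  | and {a a' b b'} : Unfolding a a' → Unfolding b b' → Unfolding (.and a b) (.and a' b')
  | dia {m ψ ψ'} : Unfolding ψ ψ' → Unfolding (.dia m ψ) (.dia m ψ')
  | gt {c α ψ ψ' k} : Unfolding ψ ψ' → Unfolding (.gt c α ψ k) (.gt c α ψ' k)
  | le {c α ψ ψ' k} : Unfolding ψ ψ' → Unfolding (.le c α ψ k) (.le c α ψ' k)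

/-- Replace every remaining fixpoint subformula `μx.ψ` by `¬⊤`. -/
def Formula.killMu {P : Type} : Formula P → Formula P
  | .mu _ => .ff
  | .or a b => .or a.killMu b.killMu
  | .and a b => .and a.killMu b.killMu
  | .dia m ψ => .dia m ψ.killMu
  | .gt c α ψ k => .gt c α ψ.killMu k
  | .le c α ψ k => .le c α ψ.killMu k
  | φ => φ

/-! A fixpoint `μx.ψ` with counting-free body is the least fixpoint of a monotone map on the
finite lattice of node sets, so it is reached by finitely many Kleene iterates from `∅`.
By induction on `n`, the `n`-th iterate is the meaning of an unfolding of `μx.ψ` whose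
remaining fixpoints are replaced by `¬⊤`: unfold once and graft the unfolding for the
previous iterate into the outermost occurrences of `x`. -/

theorem OrderHom.exists_iterate_bot_eq_lfp {α : Type*} [CompleteLattice α] [WellFoundedGT α]
    (f : α →o α) : ∃ n, f^[n] ⊥ = f.lfp := by
  have hmono : Monotone fun n => f^[n] ⊥ := Monotone.monotone_iterate_of_le_map f.monotone bot_le
  obtain ⟨n, hn⟩ := WellFoundedGT.monotone_chain_condition ⟨_, hmono⟩
  have iterate_le_lfp : ∀ k, f^[k] ⊥ ≤ f.lfp := by
    intro k
    induction k with
    | zero => exact bot_le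
    | succ k ih => rw [Function.iterate_succ_apply']; exact f.map_le_lfp ih
  refine ⟨n, le_antisymm (iterate_le_lfp n) (f.lfp_le_fixed ?_)⟩
  rw [← Function.iterate_succ_apply' f]
  exact (hn (n + 1) n.le_succ).symm

namespace Formula

variable {P : Type}

theorem lift_lift_of_le (σ : Formula P) {d e : ℕ} (h : e ≤ d) :
    (σ.lift d).lift e = (σ.lift e).lift (d + 1) := by
  induction σ generalizing d e with
  | var x =>
    simp only [lift]
    split_ifs <;> simp only [lift] <;> split_ifs <;> first | rfl | omega
  | mu ψ ih => simp [lift, ih (Nat.succ_le_succ h)]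
  | _ => simp_all [lift]

theorem subst_lift (σ τ : Formula P) (d : ℕ) : (σ.lift d).subst d τ = σ := by
  induction σ generalizing d τ with
  | var x =>
    simp only [lift]
    split_ifs <;> simp only [subst] <;> split_ifs <;> first | rfl | omega
  | _ => simp_all [lift, subst]

theorem lift_subst_of_le (ρ τ : Formula P) {d e : ℕ} (h : e ≤ d) :
    (ρ.lift e).subst (d + 1) (τ.lift e) = (ρ.subst d τ).lift e := by
  induction ρ generalizing d e τ with
  | var x =>
    simp only [lift, subst]
    split_ifs <;> simp only [lift, subst] <;> split_ifs <;> first | rfl | omega | (congr 1; omega)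
  | mu ψ ih =>
    simp only [lift, subst]
    rw [lift_lift_of_le τ (Nat.zero_le e), ih (τ.lift 0) (Nat.succ_le_succ h)]
  | _ => simp_all [lift, subst]

theorem subst_subst (b ρ σ : Formula P) (i j : ℕ) :
    (b.subst i ρ).subst (i + j) σ
      = (b.subst (i + j + 1) (σ.lift i)).subst i (ρ.subst (i + j) σ) := by
  induction b generalizing i j ρ σ with
  | var x =>
    simp only [subst]
    split_ifs <;> simp only [subst, subst_lift] <;> (try split_ifs) <;> first | rfl | omega
  | mu ψ ih =>
    simp only [subst]
    have := ih (ρ.lift 0) (σ.lift 0) (i + 1) j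
    rw [show i + 1 + j = i + j + 1 by omega] at this
    rw [this, lift_lift_of_le σ (Nat.zero_le i), lift_subst_of_le ρ σ (Nat.zero_le (i + j))]
  | _ => simp_all [subst]

/-- Substitutes `σ'` for the occurrences of the variable `d` outside every fixpoint and `σ` for
those inside one; when `σ'` unfolds `σ`, the result unfolds `a.subst d σ`, since unfoldings
never enter fixpoint bodies. -/
def substOuter : Formula P → ℕ → Formula P → Formula P → Formula P
  | .tt, _, _, _ => .tt
  | .ff, _, _, _ => .ff
  | .prop p, _, _, _ => .prop p
  | .nprop p, _, _, _ => .nprop p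
  | .var x, d, _, σ' => if x = d then σ' else if d < x then .var (x - 1) else .var x
  | .or a b, d, σ, σ' => .or (substOuter a d σ σ') (substOuter b d σ σ')
  | .and a b, d, σ, σ' => .and (substOuter a d σ σ') (substOuter b d σ σ')
  | .dia m ψ, d, σ, σ' => .dia m (substOuter ψ d σ σ')
  | .ndia m, _, _, _ => .ndia m
  | .gt c α ψ k, d, σ, σ' => .gt c α (substOuter ψ d σ σ') k
  | .le c α ψ k, d, σ, σ' => .le c α (substOuter ψ d σ σ') k
  | .mu ψ, d, σ, _ => .mu (ψ.subst (d + 1) (σ.lift 0))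

theorem killMu_substOuter (a σ σ' : Formula P) (d : ℕ) :
    (a.substOuter d σ σ').killMu = a.killMu.subst d σ'.killMu := by
  induction a <;> simp only [substOuter, killMu, subst, *]
  split_ifs <;> simp [killMu]

end Formula

namespace Unfolding

variable {P : Type}

theorem trans {a b c : Formula P} (hab : Unfolding a b) (hbc : Unfolding b c) :
    Unfolding a c := by
  induction hab generalizing c with
  | refl => exact hbc
  | mu _ ih => exact .mu (ih hbc)
  | or ha hb iha ihb =>
    cases hbc with
    | refl => exact .or ha hb
    | or ha' hb' => exact .or (iha ha') (ihb hb')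
  | and ha hb iha ihb =>
    cases hbc with
    | refl => exact .and ha hb
    | and ha' hb' => exact .and (iha ha') (ihb hb')
  | dia h ih =>
    cases hbc with
    | refl => exact .dia h
    | dia h' => exact .dia (ih h')
  | gt h ih =>
    cases hbc with
    | refl => exact .gt h
    | gt h' => exact .gt (ih h')
  | le h ih =>
    cases hbc with
    | refl => exact .le h
    | le h' => exact .le (ih h')

theorem subst {a a' : Formula P} (h : Unfolding a a') (d : ℕ) (σ : Formula P) :
    Unfolding (a.subst d σ) (a'.subst d σ) := by
  induction h generalizing d σ with
  | refl => exact .refl _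
  | @mu ψ _ _ ih =>
    refine .mu ?_
    have hcomm := Formula.subst_subst ψ (.mu ψ) σ 0 d
    simp only [Nat.zero_add] at hcomm
    exact hcomm ▸ ih d σ
  | or _ _ iha ihb => exact .or (iha d σ) (ihb d σ)
  | and _ _ iha ihb => exact .and (iha d σ) (ihb d σ)
  | dia _ ih => exact .dia (ih d σ)
  | gt _ ih => exact .gt (ih d σ)
  | le _ ih => exact .le (ih d σ)

theorem subst_substOuter (a : Formula P) {σ σ' : Formula P} (h : Unfolding σ σ') (d : ℕ) :
    Unfolding (a.subst d σ) (a.substOuter d σ σ') := by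
  induction a generalizing d with
  | var x =>
    simp only [Formula.subst, Formula.substOuter]
    split_ifs <;> first | exact h | exact .refl _
  | or _ _ iha ihb => exact .or (iha d) (ihb d)
  | and _ _ iha ihb => exact .and (iha d) (ihb d)
  | dia _ _ ih => exact .dia (ih d)
  | gt _ _ _ _ ih => exact .gt (ih d)
  | le _ _ _ _ ih => exact .le (ih d)
  | _ => exact .refl _

end Unfolding

section Semantics

variable {P : Type} (T : CTree P)

theorem sem_killMu_subst_zero (a σ : Formula P) (V : ℕ → Set T.N) :
    sem T (a.killMu.subst 0 σ) V = sem T a.killMu (Stream'.cons (sem T σ V) V) := by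
  induction a with
  | var x => cases x <;> rfl
  | _ => simp_all [Formula.killMu, Formula.subst, sem]

theorem Formula.NoCount.monotone_sem {a : Formula P} (ha : a.NoCount) : Monotone (sem T a) := by
  induction a with
  | var x => exact fun V V' h => h x
  | or a b iha ihb => exact fun V V' h => Set.union_subset_union (iha ha.1 h) (ihb ha.2 h)
  | and a b iha ihb => exact fun V V' h => Set.inter_subset_inter (iha ha.1 h) (ihb ha.2 h)
  | dia m ψ ih => exact fun V V' h n ⟨n', hR, hn'⟩ => ⟨n', hR, ih ha h hn'⟩
  | gt => exact ha.elim
  | le => exact ha.elim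
  | mu ψ ih =>
    intro V V' h
    refine Set.sInter_subset_sInter fun S hS => (ih ha ?_).trans hS
    rintro (_ | i)
    exacts [le_rfl, h i]
  | _ => exact fun _ _ _ => le_rfl

def muStep {ψ : Formula P} (hψ : ψ.NoCount) (V : ℕ → Set T.N) : Set T.N →o Set T.N where
  toFun S := sem T ψ (Stream'.cons S V)
  monotone' S S' h := hψ.monotone_sem T <| by rintro (_ | i); exacts [h, le_rfl]

theorem sem_mu_eq_lfp {ψ : Formula P} (hψ : ψ.NoCount) (V : ℕ → Set T.N) :
    sem T (.mu ψ) V = (muStep T hψ V).lfp := rfl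

theorem exists_unfolding_mu_sem_killMu_eq {ψ : Formula P} (hψ : ψ.NoCount)
    (ih : ∀ V, ∃ ψ', Unfolding ψ ψ' ∧ sem T ψ'.killMu V = sem T ψ V) (V : ℕ → Set T.N) :
    ∃ χ, Unfolding (.mu ψ) χ ∧ sem T χ.killMu V = sem T (.mu ψ) V := by
  have approx : ∀ n, ∃ χ, Unfolding (.mu ψ) χ ∧ sem T χ.killMu V = (muStep T hψ V)^[n] ⊥ := by
    intro n
    induction n with
    | zero => exact ⟨.mu ψ, .refl _, rfl⟩
    | succ n ihn =>
      obtain ⟨χ, hχ, hχsem⟩ := ihn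
      obtain ⟨ψ', hψ', hψ'sem⟩ := ih (Stream'.cons ((muStep T hψ V)^[n] ⊥) V)
      refine ⟨ψ'.substOuter 0 (.mu ψ) χ, .mu ((hψ'.subst 0 _).trans (Unfolding.subst_substOuter ψ' hχ 0)), ?_⟩
      rw [Formula.killMu_substOuter, sem_killMu_subst_zero, hχsem, hψ'sem,
        Function.iterate_succ_apply']
      rfl
  have : Finite T.N := T.fin
  obtain ⟨n, hn⟩ := (muStep T hψ V).exists_iterate_bot_eq_lfp
  obtain ⟨χ, hχ, hχsem⟩ := approx n
  exact ⟨χ, hχ, hχsem.trans (hn.trans (sem_mu_eq_lfp T hψ V).symm)⟩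

theorem Formula.CycleFree.exists_unfolding_sem_killMu_eq {φ : Formula P} (hφ : φ.CycleFree)
    (V : ℕ → Set T.N) : ∃ φ', Unfolding φ φ' ∧ sem T φ'.killMu V = sem T φ V := by
  induction φ generalizing V with
  | or a b iha ihb =>
    obtain ⟨a', ha, ha_sem⟩ := iha hφ.1 V
    obtain ⟨b', hb, hb_sem⟩ := ihb hφ.2 V
    exact ⟨.or a' b', .or ha hb, by simp [Formula.killMu, sem, ha_sem, hb_sem]⟩
  | and a b iha ihb =>
    obtain ⟨a', ha, ha_sem⟩ := iha hφ.1 V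
    obtain ⟨b', hb, hb_sem⟩ := ihb hφ.2 V
    exact ⟨.and a' b', .and ha hb, by simp [Formula.killMu, sem, ha_sem, hb_sem]⟩
  | dia m ψ ih =>
    obtain ⟨ψ', h, h_sem⟩ := ih hφ V
    exact ⟨.dia m ψ', .dia h, by simp [Formula.killMu, sem, h_sem]⟩
  | gt c α ψ k ih =>
    obtain ⟨ψ', h, h_sem⟩ := ih hφ.2 V
    exact ⟨.gt c α ψ' k, .gt h, by simp [Formula.killMu, sem, h_sem]⟩
  | le c α ψ k ih =>
    obtain ⟨ψ', h, h_sem⟩ := ih hφ.2 V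
    exact ⟨.le c α ψ' k, .le h, by simp [Formula.killMu, sem, h_sem]⟩
  | mu ψ ih => exact exists_unfolding_mu_sem_killMu_eq T hφ.2.1 (fun V => ih hφ.2.2 V) V
  | _ => exact ⟨_, .refl _, rfl⟩

end Semantics

theorem finite_unfolding_general {P : Type} (φ : Formula P) (T : CTree P)
    (hcf : φ.CycleFree) :
    ∃ φ' : Formula P, Unfolding φ φ' ∧
      sem T φ'.killMu (emptyVal T) = sem T φ (emptyVal T) :=
  hcf.exists_unfolding_sem_killMu_eq T (emptyVal T)

/-- **Lemma 1** (finite unfolding).  For every cycle-free formula `φ` and every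
finite binary tree `T` in which `φ` has a nonempty interpretation, there is a
finite unfolding `φ'` of the fixpoints of `φ` such that replacing the remaining
fixpoint subformulas of `φ'` by `¬⊤` does not change the interpretation. -/
theorem finite_unfolding {P : Type} (φ : Formula P) (T : CTree P)
    (hcf : φ.CycleFree) (hne : sem T φ (emptyVal T) ≠ ∅) :
    ∃ φ' : Formula P, Unfolding φ φ' ∧
      sem T φ'.killMu (emptyVal T) = sem T φ (emptyVal T) :=
  finite_unfolding_general φ T hcf
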